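/- Let F_log = {0} ∪ {1/log(k+1) : k ∈ ℕ, k ≥ 1} ⊆ ℝ. Then for every θ ∈ (0,1] the θ-intermediate dimension of F_log equals 1, while its Hausdorff dimension (the θ = 0 value) is 0; hence θ ↦ dim_θ F_log is discontinuous at θ = 0. -/

import Mathlib

open Set Metric MeasureTheory ENNReal

/-- A cover of `F` witnessing the `θ`-intermediate dimension sum condition at scale `δ`:
a countable cover by sets of diameter between `δ^(1/θ)` and `δ` whose `s`-power diameter
sum is at most `ε`.  (When `θ = 0` the lower bound on diameters is vacuous, recovering
the Hausdorff dimension condition.) -/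
def interCoverSum {X : Type*} [PseudoMetricSpace X]
    (θ δ s ε : ℝ) (F : Set X) : Prop :=
  ∃ 𝒰 : Set (Set X), 𝒰.Countable ∧ F ⊆ ⋃₀ 𝒰 ∧
    (∀ U ∈ 𝒰, EMetric.diam U ≤ ENNReal.ofReal δ ∧
      (θ ≠ 0 → ENNReal.ofReal (δ ^ (1 / θ)) ≤ EMetric.diam U)) ∧
    ∑' U : 𝒰, EMetric.diam (U : Set X) ^ s ≤ ENNReal.ofReal ε

/-- The lower `θ`-intermediate dimension of `F`. -/
noncomputable def lowerInterDim {X : Type*} [PseudoMetricSpace X] (θ : ℝ) (F : Set X) : ℝ :=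
  sInf {s : ℝ | 0 ≤ s ∧ ∀ ε > 0, ∀ δ₀ > 0, ∃ δ, 0 < δ ∧ δ ≤ δ₀ ∧ interCoverSum θ δ s ε F}

/-- The upper `θ`-intermediate dimension of `F`. -/
noncomputable def upperInterDim {X : Type*} [PseudoMetricSpace X] (θ : ℝ) (F : Set X) : ℝ :=
  sInf {s : ℝ | 0 ≤ s ∧ ∀ ε > 0, ∃ δ₀ > 0, ∀ δ, 0 < δ → δ ≤ δ₀ → interCoverSum θ δ s ε F}

/-- Lower box-counting dimension: the `θ = 1` lower intermediate dimension, i.e. covers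
by sets all of the same diameter. -/
noncomputable def lowerBoxDim {X : Type*} [PseudoMetricSpace X] (F : Set X) : ℝ :=
  lowerInterDim 1 F

/-- Upper box-counting dimension: the `θ = 1` upper intermediate dimension. -/
noncomputable def upperBoxDim {X : Type*} [PseudoMetricSpace X] (F : Set X) : ℝ :=
  upperInterDim 1 F

/-! Covering by intervals of length `δ` shows that every bounded subset of `ℝ` has
intermediate dimensions at most `1`. For the lower bound, the points `1 / log (k + 1)`,
`k ≤ K`, are `g`-separated with `g ≈ 1 / (K log² K)`. Taking `K ≈ δ^(-1/θ)` makes `g` at most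
the smallest admissible diameter `δ^(1/θ)`, so a cover set of diameter `D` meets at most
`2 D / g` of these points and the diameters add up to at least `K g / 2 ≈ 1 / (2 log² K)`.
As `D ≤ δ`, `∑ D^s ≥ δ^(s-1) ∑ D`, and for `s < 1` the factor `δ^(s-1)` beats
`log² K ≈ θ⁻² log² δ`. The set is countable, so its Hausdorff dimension, and its
`0`-intermediate dimension, vanish. -/

open Filter Topology

section IntermediateDimension

variable {X : Type*} [PseudoMetricSpace X]

lemma eventually_nhdsGT_zero_iff {P : ℝ → Prop} :
    (∀ᶠ δ in 𝓝[>] 0, P δ) ↔ ∃ δ₀ > 0, ∀ δ, 0 < δ → δ ≤ δ₀ → P δ := by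
  constructor
  · intro h
    obtain ⟨u, hu, hP⟩ := (nhdsGT_basis (0 : ℝ)).eventually_iff.1 h
    exact ⟨u / 2, by positivity, fun δ hδ hδu => hP ⟨hδ, by linarith⟩⟩
  · rintro ⟨δ₀, hδ₀, hP⟩
    filter_upwards [Ioc_mem_nhdsGT hδ₀] with δ hδ using hP δ hδ.1 hδ.2

lemma frequently_nhdsGT_zero_iff {P : ℝ → Prop} :
    (∃ᶠ δ in 𝓝[>] 0, P δ) ↔ ∀ δ₀ > 0, ∃ δ, 0 < δ ∧ δ ≤ δ₀ ∧ P δ := by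
  rw [Filter.Frequently, eventually_nhdsGT_zero_iff]
  push Not
  rfl

lemma lowerInterDim_eq_sInf (θ : ℝ) (F : Set X) :
    lowerInterDim θ F =
      sInf {s | 0 ≤ s ∧ ∀ ε > 0, ∃ᶠ δ in 𝓝[>] 0, interCoverSum θ δ s ε F} := by
  simp only [frequently_nhdsGT_zero_iff]
  rfl

lemma upperInterDim_eq_sInf (θ : ℝ) (F : Set X) :
    upperInterDim θ F =
      sInf {s | 0 ≤ s ∧ ∀ ε > 0, ∀ᶠ δ in 𝓝[>] 0, interCoverSum θ δ s ε F} := by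
  simp only [eventually_nhdsGT_zero_iff]
  rfl

lemma csInf_eq_of_Ioi_subset {S : Set ℝ} {a : ℝ} (hIoi : Ioi a ⊆ S) (hle : ∀ s ∈ S, a ≤ s) :
    sInf S = a :=
  csInf_eq_of_forall_ge_of_forall_gt_exists_lt ⟨a + 1, hIoi (by simp)⟩ hle
    fun w hw => ⟨(a + w) / 2, hIoi (by simp only [mem_Ioi]; linarith), by linarith⟩

theorem lowerInterDim_eq_and_upperInterDim_eq {θ a : ℝ} {F : Set X} (ha : 0 ≤ a)
    (hcover : ∀ s > a, ∀ ε > 0, ∀ᶠ δ in 𝓝[>] 0, interCoverSum θ δ s ε F)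
    (hnot : ∀ s, 0 ≤ s → s < a → ∃ ε > 0, ∀ᶠ δ in 𝓝[>] 0, ¬ interCoverSum θ δ s ε F) :
    lowerInterDim θ F = a ∧ upperInterDim θ F = a := by
  have hge : ∀ s, 0 ≤ s → (∀ ε > 0, ∃ᶠ δ in 𝓝[>] 0, interCoverSum θ δ s ε F) → a ≤ s := by
    intro s hs0 hs
    by_contra! hsa
    obtain ⟨ε, hε, hno⟩ := hnot s hs0 hsa
    obtain ⟨δ, hyes, hno⟩ := ((hs ε hε).and_eventually hno).exists
    exact hno hyes
  rw [lowerInterDim_eq_sInf, upperInterDim_eq_sInf]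
  exact ⟨csInf_eq_of_Ioi_subset
      (fun s hs => ⟨ha.trans hs.le, fun ε hε => (hcover s hs ε hε).frequently⟩)
      fun s hs => hge s hs.1 hs.2,
    csInf_eq_of_Ioi_subset (fun s hs => ⟨ha.trans hs.le, hcover s hs⟩)
      fun s hs => hge s hs.1 fun ε hε => (hs.2 ε hε).frequently⟩

lemma interCoverSum_iff {θ δ s ε : ℝ} {F : Set X} :
    interCoverSum θ δ s ε F ↔ ∃ 𝒰 : Set (Set X), 𝒰.Countable ∧ F ⊆ ⋃₀ 𝒰 ∧
      (∀ U ∈ 𝒰, ediam U ≤ ENNReal.ofReal δ ∧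
        (θ ≠ 0 → ENNReal.ofReal (δ ^ (1 / θ)) ≤ ediam U)) ∧
      ∑' U : 𝒰, ediam (U : Set X) ^ s ≤ ENNReal.ofReal ε :=
  Iff.rfl

lemma interCoverSum.mono {θ δ s ε : ℝ} {F G : Set X} (h : interCoverSum θ δ s ε G)
    (hFG : F ⊆ G) : interCoverSum θ δ s ε F := by
  obtain ⟨𝒰, hcount, hcover, hdiam, hsum⟩ := h
  exact ⟨𝒰, hcount, hFG.trans hcover, hdiam, hsum⟩

lemma interCoverSum_zero_of_countable {F : Set X} (hF : F.Countable) (δ ε : ℝ) {s : ℝ}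
    (hs : 0 < s) : interCoverSum 0 δ s ε F := by
  rw [interCoverSum_iff]
  refine ⟨(fun x => {x}) '' F, hF.image _, fun x hx => ⟨{x}, mem_image_of_mem _ hx, rfl⟩,
    ?_, ?_⟩
  · rintro _ ⟨x, -, rfl⟩
    simp
  · have hzero : ∀ U : ((fun x => ({x} : Set X)) '' F), ediam (U : Set X) ^ s = 0 := by
      rintro ⟨_, x, -, rfl⟩
      simp [hs]
    simp [hzero]

lemma lowerInterDim_zero_of_countable {F : Set X} (hF : F.Countable) :
    lowerInterDim 0 F = 0 :=
  (lowerInterDim_eq_and_upperInterDim_eq le_rfl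
    (fun _ hs ε _ => .of_forall fun δ => interCoverSum_zero_of_countable hF δ ε hs)
    (fun _ hs0 hs => absurd hs0 hs.not_ge)).1

end IntermediateDimension

lemma interCoverSum_Icc {a b θ δ s ε : ℝ} (hab : a ≤ b) (hθ0 : 0 < θ) (hθ1 : θ ≤ 1)
    (hδ : 0 < δ) (hδ1 : δ ≤ 1) (hsum : (b - a) * δ ^ (s - 1) + δ ^ s ≤ ε) :
    interCoverSum θ δ s ε (Icc a b) := by
  set N := ⌊(b - a) / δ⌋₊ + 1
  set I : ℕ → Set ℝ := fun i => Icc (a + i * δ) (a + (i + 1) * δ)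
  have hdiam : ∀ i, ediam (I i) = ENNReal.ofReal δ := fun i => by
    simp only [I, Real.ediam_Icc]
    ring_nf
  rw [interCoverSum_iff]
  refine ⟨(Finset.range N).image I, (Finset.finite_toSet _).countable, ?_, ?_, ?_⟩
  · intro x ⟨hax, hxb⟩
    have hxa : 0 ≤ (x - a) / δ := div_nonneg (by linarith) hδ.le
    refine ⟨I ⌊(x - a) / δ⌋₊, Finset.mem_coe.2 (Finset.mem_image_of_mem I
      (Finset.mem_range.2 (Nat.lt_succ_of_le (Nat.floor_le_floor ?_)))), ?_, ?_⟩
    · gcongr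
    · have := Nat.floor_le hxa
      rw [le_div_iff₀ hδ] at this
      linarith
    · have := Nat.lt_floor_add_one ((x - a) / δ)
      rw [div_lt_iff₀ hδ] at this
      linarith
  · intro U hU
    obtain ⟨i, -, rfl⟩ := Finset.mem_image.1 hU
    refine ⟨(hdiam i).le, fun _ => (hdiam i).symm ▸ ENNReal.ofReal_le_ofReal ?_⟩
    calc δ ^ (1 / θ) ≤ δ ^ (1 : ℝ) :=
          Real.rpow_le_rpow_of_exponent_ge hδ hδ1 (one_le_one_div hθ0 hθ1)
      _ = δ := Real.rpow_one δ
  · have hN : (N : ℝ) * δ ^ s ≤ ε := by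
      have hfloor : (⌊(b - a) / δ⌋₊ : ℝ) * δ ≤ b - a :=
        (le_div_iff₀ hδ).1 (Nat.floor_le (div_nonneg (by linarith) hδ.le))
      calc (N : ℝ) * δ ^ s = ⌊(b - a) / δ⌋₊ * δ * δ ^ (s - 1) + δ ^ s := by
            rw [Real.rpow_sub_one hδ.ne']
            simp only [N, Nat.cast_add, Nat.cast_one]
            field_simp
        _ ≤ (b - a) * δ ^ (s - 1) + δ ^ s := by gcongr
        _ ≤ ε := hsum
    rw [Finset.tsum_subtype' ((Finset.range N).image I) (fun U => ediam U ^ s)]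
    calc ∑ U ∈ (Finset.range N).image I, ediam U ^ s
        ≤ ∑ i ∈ Finset.range N, ediam (I i) ^ s :=
          Finset.sum_image_le_of_nonneg fun _ _ => zero_le
      _ = ENNReal.ofReal (N * δ ^ s) := by
          simp only [hdiam, Finset.sum_const, Finset.card_range, nsmul_eq_mul]
          rw [ENNReal.ofReal_rpow_of_pos hδ, ENNReal.ofReal_mul (by positivity),
            ENNReal.ofReal_natCast]
      _ ≤ ENNReal.ofReal ε := ENNReal.ofReal_le_ofReal hN

lemma tendsto_rpow_nhdsGT_zero {p : ℝ} (hp : 0 < p) :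
    Tendsto (fun δ : ℝ => δ ^ p) (𝓝[>] 0) (𝓝 0) := by
  have h := (Real.continuousAt_rpow_const 0 p (Or.inr hp.le)).tendsto
  rw [Real.zero_rpow hp.ne'] at h
  exact h.mono_left nhdsWithin_le_nhds

lemma eventually_interCoverSum_Icc {a b θ s ε : ℝ} (hab : a ≤ b) (hθ0 : 0 < θ) (hθ1 : θ ≤ 1)
    (hs : 1 < s) (hε : 0 < ε) : ∀ᶠ δ in 𝓝[>] 0, interCoverSum θ δ s ε (Icc a b) := by
  have hlim : Tendsto (fun δ : ℝ => (b - a) * δ ^ (s - 1) + δ ^ s) (𝓝[>] 0) (𝓝 0) := by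
    simpa using ((tendsto_rpow_nhdsGT_zero (sub_pos.2 hs)).const_mul (b - a)).add
      (tendsto_rpow_nhdsGT_zero (zero_lt_one.trans hs))
  filter_upwards [hlim.eventually_lt_const hε, Ioc_mem_nhdsGT one_pos] with δ hsum hδ
  exact interCoverSum_Icc hab hθ0 hθ1 hδ.1 hδ.2 hsum.le

lemma ofReal_rpow_sub_one_mul_le_rpow {x : ℝ≥0∞} {δ s : ℝ} (hx : 0 < x)
    (hxδ : x ≤ ENNReal.ofReal δ) (hs : s ≤ 1) : ENNReal.ofReal (δ ^ (s - 1)) * x ≤ x ^ s := by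
  have hxtop : x ≠ ⊤ := ne_top_of_le_ne_top ENNReal.ofReal_ne_top hxδ
  have hD : 0 < x.toReal := ENNReal.toReal_pos hx.ne' hxtop
  have hδ : 0 < δ := ENNReal.ofReal_pos.1 (hx.trans_le hxδ)
  have hDδ : x.toReal ≤ δ := ENNReal.toReal_le_of_le_ofReal hδ.le hxδ
  calc ENNReal.ofReal (δ ^ (s - 1)) * x = ENNReal.ofReal (δ ^ (s - 1) * x.toReal) := by
        rw [ENNReal.ofReal_mul (by positivity), ENNReal.ofReal_toReal hxtop]
    _ ≤ ENNReal.ofReal (x.toReal ^ s) := by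
        refine ENNReal.ofReal_le_ofReal ?_
        calc δ ^ (s - 1) * x.toReal ≤ x.toReal ^ (s - 1) * x.toReal := by
              gcongr ?_ * _
              exact Real.rpow_le_rpow_of_nonpos hD hDδ (by linarith)
          _ = x.toReal ^ s := by
              rw [Real.rpow_sub_one hD.ne']
              field_simp
    _ = x ^ s := by rw [← ENNReal.ofReal_rpow_of_pos hD, ENNReal.ofReal_toReal hxtop]

section SeparatedSequence

variable {f : ℕ → ℝ} {g : ℝ} {m n : ℕ}

lemma mul_le_sub_of_le_sub_succ (hgap : ∀ k ∈ Finset.Ico m n, g ≤ f k - f (k + 1))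
    {i j : ℕ} (hmi : m ≤ i) (hij : i ≤ j) (hjn : j ≤ n) : ((j - i : ℕ) : ℝ) * g ≤ f i - f j :=
  calc ((j - i : ℕ) : ℝ) * g = ∑ _k ∈ Finset.Ico i j, g := by simp
    _ ≤ ∑ k ∈ Finset.Ico i j, (f k - f (k + 1)) :=
        Finset.sum_le_sum fun k hk => hgap k (Finset.Ico_subset_Ico hmi hjn hk)
    _ = f i - f j := by
        have := Finset.sum_Ico_sub (fun k => -f k) hij
        simp only [sub_neg_eq_add, neg_add_eq_sub] at this
        rw [← this]

open scoped Classical in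
lemma card_filter_mem_mul_le (hg : 0 ≤ g) (hgap : ∀ k ∈ Finset.Ico m n, g ≤ f k - f (k + 1))
    (V : Set ℝ) :
    (((Finset.Icc m n).filter (f · ∈ V)).card : ℝ≥0∞) * ENNReal.ofReal g
      ≤ ediam V + ENNReal.ofReal g := by
  set T := (Finset.Icc m n).filter (f · ∈ V)
  rcases T.eq_empty_or_nonempty with hT | hT
  · simp [hT]
  obtain ⟨hi, hfi⟩ := Finset.mem_filter.1 (T.min'_mem hT)
  obtain ⟨hj, hfj⟩ := Finset.mem_filter.1 (T.max'_mem hT)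
  set i := T.min' hT
  set j := T.max' hT
  have hij : i ≤ j := T.min'_le _ (T.max'_mem hT)
  have hcard : T.card ≤ j - i + 1 := by
    calc T.card ≤ (Finset.Icc i j).card :=
          Finset.card_le_card fun k hk => Finset.mem_Icc.2 ⟨T.min'_le k hk, T.le_max' k hk⟩
      _ = j - i + 1 := by simp only [Nat.card_Icc]; omega
  have hsep := mul_le_sub_of_le_sub_succ hgap (Finset.mem_Icc.1 hi).1 hij
    (Finset.mem_Icc.1 hj).2
  calc (T.card : ℝ≥0∞) * ENNReal.ofReal g = ENNReal.ofReal (T.card * g) := by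
        rw [ENNReal.ofReal_mul (Nat.cast_nonneg _), ENNReal.ofReal_natCast]
    _ ≤ ENNReal.ofReal ((j - i : ℕ) * g + g) := by
        gcongr
        calc (T.card : ℝ) * g ≤ ((j - i + 1 : ℕ) : ℝ) * g := by gcongr
          _ = _ := by push_cast; ring
    _ ≤ ENNReal.ofReal ((j - i : ℕ) * g) + ENNReal.ofReal g := ENNReal.ofReal_add_le
    _ ≤ edist (f i) (f j) + ENNReal.ofReal g := by
        gcongr
        rw [edist_dist, Real.dist_eq]
        exact ENNReal.ofReal_le_ofReal (hsep.trans (le_abs_self _))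
    _ ≤ ediam V + ENNReal.ofReal g := by gcongr; exact edist_le_ediam_of_mem hfi hfj

open scoped Classical in
lemma card_le_tsum_card_filter_mem {𝒰 : Set (Set ℝ)}
    (hcover : ∀ k ∈ Finset.Icc m n, ∃ U ∈ 𝒰, f k ∈ U) :
    ((Finset.Icc m n).card : ℝ≥0∞)
      ≤ ∑' U : 𝒰, (((Finset.Icc m n).filter (f · ∈ (U : Set ℝ))).card : ℝ≥0∞) :=
  calc ((Finset.Icc m n).card : ℝ≥0∞) = ∑ _k ∈ Finset.Icc m n, (1 : ℝ≥0∞) := by simp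
    _ ≤ ∑ k ∈ Finset.Icc m n, ∑' U : 𝒰, if f k ∈ (U : Set ℝ) then (1 : ℝ≥0∞) else 0 :=
        Finset.sum_le_sum fun k hk => by
          obtain ⟨U, hU, hkU⟩ := hcover k hk
          exact (if_pos hkU).symm.le.trans
            (ENNReal.le_tsum (f := fun U : 𝒰 => if f k ∈ (U : Set ℝ) then 1 else 0) ⟨U, hU⟩)
    _ = ∑' U : 𝒰, ∑ k ∈ Finset.Icc m n, if f k ∈ (U : Set ℝ) then (1 : ℝ≥0∞) else 0 :=
        (Summable.tsum_finsetSum fun _ _ => ENNReal.summable).symm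
    _ = _ := by simp only [Finset.sum_boole]

theorem mul_le_two_mul_tsum_ediam_rpow {δ s : ℝ} (hg : 0 < g) (hs : s ≤ 1)
    (hgap : ∀ k ∈ Finset.Ico m n, g ≤ f k - f (k + 1)) {𝒰 : Set (Set ℝ)}
    (hcover : ∀ k ∈ Finset.Icc m n, ∃ U ∈ 𝒰, f k ∈ U)
    (hdiam : ∀ U ∈ 𝒰, ENNReal.ofReal g ≤ ediam U ∧ ediam U ≤ ENNReal.ofReal δ) :
    ENNReal.ofReal ((Finset.Icc m n).card * g * δ ^ (s - 1))
      ≤ 2 * ∑' U : 𝒰, ediam (U : Set ℝ) ^ s := by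
  classical
  have hcount (U : 𝒰) :
      (((Finset.Icc m n).filter (f · ∈ (U : Set ℝ))).card : ℝ≥0∞) * ENNReal.ofReal g
        ≤ 2 * ediam (U : Set ℝ) := by
    calc _ ≤ ediam (U : Set ℝ) + ENNReal.ofReal g := card_filter_mem_mul_le hg.le hgap U
      _ ≤ ediam (U : Set ℝ) + ediam (U : Set ℝ) := by gcongr; exact (hdiam U U.2).1
      _ = 2 * ediam (U : Set ℝ) := (two_mul _).symm
  have hpow (U : 𝒰) :
      ENNReal.ofReal (δ ^ (s - 1)) * ediam (U : Set ℝ) ≤ ediam (U : Set ℝ) ^ s :=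
    ofReal_rpow_sub_one_mul_le_rpow ((ENNReal.ofReal_pos.2 hg).trans_le (hdiam U U.2).1)
      (hdiam U U.2).2 hs
  calc ENNReal.ofReal ((Finset.Icc m n).card * g * δ ^ (s - 1))
      = (Finset.Icc m n).card * ENNReal.ofReal g * ENNReal.ofReal (δ ^ (s - 1)) := by
        rw [ENNReal.ofReal_mul (by positivity), ENNReal.ofReal_mul (by positivity),
          ENNReal.ofReal_natCast]
    _ ≤ (∑' U : 𝒰, (((Finset.Icc m n).filter (f · ∈ (U : Set ℝ))).card : ℝ≥0∞))
          * ENNReal.ofReal g * ENNReal.ofReal (δ ^ (s - 1)) := by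
        gcongr
        exact card_le_tsum_card_filter_mem hcover
    _ ≤ ∑' U : 𝒰, 2 * ediam (U : Set ℝ) * ENNReal.ofReal (δ ^ (s - 1)) := by
        rw [← ENNReal.tsum_mul_right, ← ENNReal.tsum_mul_right]
        exact ENNReal.tsum_le_tsum fun U => by gcongr ?_ * _; exact hcount U
    _ ≤ ∑' U : 𝒰, 2 * ediam (U : Set ℝ) ^ s :=
        ENNReal.tsum_le_tsum fun U => by rw [mul_assoc, mul_comm (ediam _)]; gcongr; exact hpow U
    _ = 2 * ∑' U : 𝒰, ediam (U : Set ℝ) ^ s := ENNReal.tsum_mul_left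

end SeparatedSequence

section LogSequence

noncomputable def logSeq (k : ℕ) : ℝ := 1 / Real.log (k + 1)

def Flog : Set ℝ := insert 0 {x | ∃ k : ℕ, 1 ≤ k ∧ x = 1 / Real.log (k + 1)}

noncomputable def logGap (K : ℕ) : ℝ := ((K + 1) * Real.log (K + 1) ^ 2)⁻¹

lemma logSeq_mem_Flog {k : ℕ} (hk : 1 ≤ k) : logSeq k ∈ Flog := Or.inr ⟨k, hk, rfl⟩

lemma countable_Flog : Flog.Countable := by
  refine ((countable_range logSeq).mono ?_).insert 0
  rintro _ ⟨k, -, rfl⟩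
  exact mem_range_self k

lemma log_natCast_add_one_pos {k : ℕ} (hk : 1 ≤ k) : 0 < Real.log (k + 1) :=
  Real.log_pos (by linarith [Nat.one_le_cast (α := ℝ) |>.2 hk])

lemma Flog_subset_Icc : Flog ⊆ Icc 0 2 := by
  rintro x (rfl | ⟨k, hk, rfl⟩)
  · norm_num
  have hlog : 1 / 2 ≤ Real.log (k + 1) := by
    have h2 : Real.log 2 ≤ Real.log (k + 1) :=
      Real.log_le_log two_pos (by linarith [Nat.one_le_cast (α := ℝ) |>.2 hk])
    linarith [Real.log_two_gt_d9]
  exact ⟨by positivity, by rw [div_le_iff₀ (by linarith)]; linarith⟩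

lemma logGap_pos {K : ℕ} (hK : 1 ≤ K) : 0 < logGap K :=
  inv_pos.2 (mul_pos (by positivity) (pow_pos (log_natCast_add_one_pos hK) 2))

lemma logGap_le_logSeq_sub_succ {k K : ℕ} (hk : 1 ≤ k) (hkK : k < K) :
    logGap K ≤ logSeq k - logSeq (k + 1) := by
  have hkK' : (k : ℝ) + 2 ≤ K + 1 := by
    have : (k : ℝ) + 1 ≤ K := by exact_mod_cast hkK
    linarith
  set A := Real.log (k + 1)
  set B := Real.log (k + 2)
  have hA : 0 < A := log_natCast_add_one_pos hk
  have hAB : A ≤ B := Real.log_le_log (by positivity) (by linarith)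
  have hBK : B ≤ Real.log (K + 1) := Real.log_le_log (by positivity) hkK'
  have hdiff : 1 / ((k : ℝ) + 2) ≤ B - A := by
    have h := Real.one_sub_inv_le_log_of_pos (x := ((k : ℝ) + 2) / (k + 1)) (by positivity)
    rw [Real.log_div (by positivity) (by positivity), inv_div] at h
    calc 1 / ((k : ℝ) + 2) = 1 - (k + 1) / (k + 2) := by field_simp; ring
      _ ≤ B - A := h
  have hB : 0 < B := hA.trans_le hAB
  have hAB0 : 0 < A * B := mul_pos hA hB
  calc logGap K ≤ ((k + 2) * (A * B))⁻¹ :=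
        inv_anti₀ (by positivity) (mul_le_mul hkK' (by nlinarith) hAB0.le (by positivity))
    _ = 1 / ((k : ℝ) + 2) / (A * B) := by rw [mul_inv, one_div, div_eq_mul_inv]
    _ ≤ (B - A) / (A * B) := div_le_div_of_nonneg_right hdiff hAB0.le
    _ = 1 / A - 1 / B := by field_simp
    _ = logSeq k - logSeq (k + 1) := by
        rw [logSeq, logSeq, Nat.cast_add_one, add_assoc, one_add_one_eq_two]

lemma one_le_log_natCast_add_one {K : ℕ} (hK : 2 ≤ K) : 1 ≤ Real.log (K + 1) := by
  have hK' : (2 : ℝ) ≤ K := by exact_mod_cast hK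
  rw [Real.le_log_iff_exp_le (by positivity)]
  linarith [Real.exp_one_lt_d9]

lemma logGap_le_inv {K : ℕ} (hK : 2 ≤ K) : logGap K ≤ ((K : ℝ) + 1)⁻¹ :=
  inv_anti₀ (by positivity)
    (le_mul_of_one_le_right (by positivity) (one_le_pow₀ (one_le_log_natCast_add_one hK)))

lemma half_le_mul_logGap_mul {K : ℕ} (hK : 1 ≤ K) {D : ℝ} (hD : Real.log (K + 1) ^ 2 ≤ D) :
    1 / 2 ≤ K * logGap K * D := by
  have hK' : (1 : ℝ) ≤ K := by exact_mod_cast hK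
  have := logGap_pos hK
  have := log_natCast_add_one_pos hK
  calc (1 : ℝ) / 2 ≤ K / (K + 1) := by rw [div_le_div_iff₀ two_pos (by positivity)]; linarith
    _ = K * logGap K * Real.log (K + 1) ^ 2 := by
        rw [logGap]
        field_simp
    _ ≤ K * logGap K * D := by gcongr

/- `K ≈ δ^(-1/θ)` makes `logGap K ≤ δ^(1/θ)`; with `b = θ (1 - s) / 4`, the bound
`log (K + 1) ≤ (K + 1)^b / b ≲ δ^(-(1-s)/4)` then gives `log² (K + 1) ≤ δ^(s-1)` for small `δ`. -/
lemma eventually_exists_logGap_le {θ s : ℝ} (hθ : 0 < θ) (hs : s < 1) :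
    ∀ᶠ δ in 𝓝[>] 0, ∃ K : ℕ, 1 ≤ K ∧ logGap K ≤ δ ^ (1 / θ) ∧
      1 / 2 ≤ K * logGap K * δ ^ (s - 1) := by
  set ρ := (1 - s) / 4
  have hρ : 0 < ρ := div_pos (sub_pos.2 hs) four_pos
  set b := θ * ρ with hbdef
  have hb : 0 < b := mul_pos hθ hρ
  have hsmall := ((tendsto_rpow_nhdsGT_zero hρ).const_mul ((5 : ℝ) ^ b / b)).eventually_lt_const
    (by rw [mul_zero]; exact one_pos)
  filter_upwards [hsmall, Ioc_mem_nhdsGT one_pos] with δ hcδ ⟨hδ, hδ1⟩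
  set x := δ ^ (-(1 / θ)) with hxdef
  have hx1 : 1 ≤ x := Real.one_le_rpow_of_pos_of_le_one_of_nonpos hδ hδ1
    (neg_nonpos.2 (one_div_pos.2 hθ).le)
  obtain ⟨K, hxK, hKx, hK2⟩ : ∃ K : ℕ, x ≤ K + 1 ∧ (K : ℝ) + 1 ≤ 5 * x ∧ 2 ≤ K := by
    refine ⟨⌈x⌉₊ + 2, ?_, ?_, by omega⟩ <;> push_cast
    · linarith [Nat.le_ceil x]
    · linarith [Nat.ceil_lt_add_one (zero_le_one.trans hx1)]
  refine ⟨K, by omega, ?_, half_le_mul_logGap_mul (by omega) ?_⟩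
  · calc logGap K ≤ ((K : ℝ) + 1)⁻¹ := logGap_le_inv hK2
      _ ≤ x⁻¹ := inv_anti₀ (by positivity) hxK
      _ = δ ^ (1 / θ) := by rw [hxdef, Real.rpow_neg hδ.le, inv_inv]
  set u := δ ^ ρ
  have hu : 0 < u := Real.rpow_pos_of_pos hδ ρ
  have hxb : x ^ b = u⁻¹ := by
    rw [hxdef, ← Real.rpow_mul hδ.le, ← Real.rpow_neg hδ.le, hbdef]
    congr 1
    field_simp
  have hlogu : Real.log (K + 1) ≤ (u ^ 2)⁻¹ :=
    calc Real.log (K + 1) ≤ ((K : ℝ) + 1) ^ b / b := Real.log_le_rpow_div (by positivity) hb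
      _ ≤ (5 * x) ^ b / b := by gcongr
      _ = (5 : ℝ) ^ b / b * u⁻¹ := by rw [Real.mul_rpow (by norm_num) (by positivity), hxb]; ring
      _ ≤ u⁻¹ * u⁻¹ := by
          gcongr
          rw [inv_eq_one_div, le_div_iff₀ hu]
          exact hcδ.le
      _ = (u ^ 2)⁻¹ := by ring
  have hδu : δ ^ (s - 1) = (u ^ 4)⁻¹ := by
    rw [show s - 1 = -(ρ * (4 : ℕ)) by simp only [ρ]; push_cast; ring, Real.rpow_neg hδ.le,
      Real.rpow_mul_natCast hδ.le]
  calc Real.log (K + 1) ^ 2 ≤ ((u ^ 2)⁻¹) ^ 2 :=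
        pow_le_pow_left₀ (zero_le_one.trans (one_le_log_natCast_add_one hK2)) hlogu 2
    _ = δ ^ (s - 1) := by rw [hδu]; ring

lemma eventually_not_interCoverSum_Flog {θ s : ℝ} (hθ : 0 < θ) (hs : s < 1) :
    ∀ᶠ δ in 𝓝[>] 0, ¬ interCoverSum θ δ s (1 / 5) Flog := by
  filter_upwards [eventually_exists_logGap_le hθ hs] with δ ⟨K, hK, hgapδ, hbig⟩
  rw [interCoverSum_iff]
  rintro ⟨𝒰, -, hcover, hdiam, hsum⟩
  have hlower := mul_le_two_mul_tsum_ediam_rpow (f := logSeq) (m := 1) (n := K) (logGap_pos hK)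
    hs.le (fun k hk => logGap_le_logSeq_sub_succ (Finset.mem_Ico.1 hk).1 (Finset.mem_Ico.1 hk).2)
    (fun k hk => hcover (logSeq_mem_Flog (Finset.mem_Icc.1 hk).1))
    (fun U hU => ⟨(ENNReal.ofReal_le_ofReal hgapδ).trans ((hdiam U hU).2 hθ.ne'), (hdiam U hU).1⟩)
  rw [Nat.card_Icc, Nat.add_sub_cancel] at hlower
  have : ENNReal.ofReal (1 / 2) ≤ ENNReal.ofReal (2 / 5) :=
    calc ENNReal.ofReal (1 / 2) ≤ ENNReal.ofReal (K * logGap K * δ ^ (s - 1)) :=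
          ENNReal.ofReal_le_ofReal hbig
      _ ≤ 2 * ∑' U : 𝒰, ediam (U : Set ℝ) ^ s := hlower
      _ ≤ 2 * ENNReal.ofReal (1 / 5) := by gcongr
      _ = ENNReal.ofReal (2 / 5) := by
          rw [← ENNReal.ofReal_ofNat 2, ← ENNReal.ofReal_mul zero_le_two]
          norm_num
  rw [ENNReal.ofReal_le_ofReal_iff (by norm_num)] at this
  norm_num at this

end LogSequence

theorem interDims_Flog {θ : ℝ} (hθ0 : 0 < θ) (hθ1 : θ ≤ 1) :
    lowerInterDim θ Flog = 1 ∧ upperInterDim θ Flog = 1 :=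
  lowerInterDim_eq_and_upperInterDim_eq zero_le_one
    (fun _ hs _ hε => (eventually_interCoverSum_Icc zero_le_two hθ0 hθ1 hs hε).mono
      fun _ h => h.mono Flog_subset_Icc)
    (fun _ _ hs => ⟨1 / 5, by norm_num, eventually_not_interCoverSum_Flog hθ0 hs⟩)

theorem stmt16 :
    (∀ θ ∈ Set.Ioc (0:ℝ) 1,
      lowerInterDim θ (insert (0:ℝ) {x | ∃ k : ℕ, 1 ≤ k ∧ x = 1 / Real.log (k + 1)}) = 1 ∧
      upperInterDim θ (insert (0:ℝ) {x | ∃ k : ℕ, 1 ≤ k ∧ x = 1 / Real.log (k + 1)}) = 1) ∧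
    dimH (insert (0:ℝ) {x | ∃ k : ℕ, 1 ≤ k ∧ x = 1 / Real.log (k + 1)}) = 0 ∧
    lowerInterDim 0 (insert (0:ℝ) {x | ∃ k : ℕ, 1 ≤ k ∧ x = 1 / Real.log (k + 1)}) = 0 ∧
    ¬ ContinuousWithinAt
        (fun θ => lowerInterDim θ
          (insert (0:ℝ) {x | ∃ k : ℕ, 1 ≤ k ∧ x = 1 / Real.log (k + 1)}))
        (Set.Ici 0) 0 := by
  have hdim : ∀ θ ∈ Ioc (0 : ℝ) 1, lowerInterDim θ Flog = 1 ∧ upperInterDim θ Flog = 1 :=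
    fun θ hθ => interDims_Flog hθ.1 hθ.2
  have hzero : lowerInterDim 0 Flog = 0 := lowerInterDim_zero_of_countable countable_Flog
  refine ⟨hdim, dimH_countable countable_Flog, hzero, fun hcont => ?_⟩
  have hto0 : Tendsto (fun θ => lowerInterDim θ Flog) (𝓝[>] 0) (𝓝 0) := by
    have h : ContinuousWithinAt (fun θ => lowerInterDim θ Flog) (Ioi 0) 0 :=
      hcont.mono Ioi_subset_Ici_self
    rwa [ContinuousWithinAt, hzero] at h
  have hto1 : Tendsto (fun θ => lowerInterDim θ Flog) (𝓝[>] 0) (𝓝 1) :=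
    tendsto_const_nhds.congr' <| eventually_of_mem (Ioc_mem_nhdsGT one_pos)
      fun θ hθ => (hdim θ hθ).1.symm
  exact zero_ne_one (tendsto_nhds_unique hto0 hto1)
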